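/- For every δ > 0, the tube-measure of the 'square tube' [−δ, δ]^{n−1} × ℝ ⊆ ℝⁿ (n ≥ 2) equals (2δ)^{n−1}. -/

import Mathlib

/-!
Write `ℝ^(m+1) = ℝ^m × ℝ`; the square tube is `A × ℝ` for the cube `A = [-δ, δ]^m`, and for any
bounded `A` the tube measure of `A × ℝ` is the volume of `A`.

Upper bound: cover `A` by closed balls whose volumes add up to at most `vol A + ε` (Besicovitch);
the vertical tubes over these balls cover `A × ℝ` at exactly that cost.

Lower bound: after rotating its axis to the vertical, a tube of radius `r` meets the ball
`B(0, C + R)` inside a vertical cylinder of height `2(C + R)` over an `m`-ball of radius `r`, of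
volume `2(C + R) γ_m r^m`. If `A ⊆ B(0, C)` and the tubes `Tᵢ` cover `A × ℝ`, they cover
`A × [-R, R] ⊆ B(0, C + R)`, so `2R vol A ≤ 2(C + R) Σ γ_m rᵢ^m`; let `R → ∞`.
-/

open MeasureTheory Metric Set

noncomputable def unitBallVolume (k : ℕ) : ENNReal :=
  volume (Metric.closedBall (0 : EuclideanSpace ℝ (Fin k)) 1)

def IsTube {n : ℕ} (T : Set (EuclideanSpace ℝ (Fin n))) (r : ℝ) : Prop :=
  0 < r ∧ ∃ p v : EuclideanSpace ℝ (Fin n), v ≠ 0 ∧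
    T = Metric.cthickening r {x | ∃ t : ℝ, x = p + t • v}

noncomputable def tubeMeasure (n : ℕ) (E : Set (EuclideanSpace ℝ (Fin n))) : ENNReal :=
  ⨅ (T : ℕ → Set (EuclideanSpace ℝ (Fin n))) (r : ℕ → ℝ)
    (_ : ∀ i, IsTube (T i) (r i)) (_ : E ⊆ ⋃ i, T i),
    ∑' i, unitBallVolume (n - 1) * ENNReal.ofReal (r i ^ (n - 1))


/-- The square tube `[-δ, δ]^{n-1} × ℝ` inside `ℝ^n = ℝ^{n-1} × ℝ`. -/
def squareTube (m : ℕ) (δ : ℝ) : Set (EuclideanSpace ℝ (Fin (m + 1))) :=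
  {x | ∀ i : Fin m, x i.castSucc ∈ Set.Icc (-δ) δ}

open scoped ENNReal
open EuclideanSpace

lemma LipschitzWith.dist_le_of_mem_cthickening {α β : Type*} [PseudoMetricSpace α]
    [PseudoMetricSpace β] {f : α → β} (hf : LipschitzWith 1 f) {L : Set α} {b : β}
    (hL : ∀ y ∈ L, f y = b) {r : ℝ} (hr : 0 ≤ r) {x : α} (hx : x ∈ cthickening r L) :
    dist (f x) b ≤ r := by
  have : edist (f x) b ≤ infEDist x L :=
    le_infEDist.2 fun y hy => hL y hy ▸ by simpa using hf.edist_le_mul x y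
  rw [← ENNReal.ofReal_le_ofReal_iff hr, ← edist_dist]
  exact this.trans (mem_cthickening_iff.1 hx)

open Filter Topology in
lemma ENNReal.le_of_forall_ofReal_mul_le {a b : ℝ≥0∞} {C : ℝ}
    (h : ∀ R : ℝ, 0 < R → ENNReal.ofReal (2 * R) * a ≤ ENNReal.ofReal (2 * (C + R)) * b) :
    a ≤ b := by
  have hle : ∀ R : ℝ, 0 < R → a ≤ ENNReal.ofReal (1 + C / R) * b := by
    intro R hR
    have h2R : ENNReal.ofReal (2 * R) ≠ 0 := by simpa using hR
    rw [← ENNReal.mul_le_mul_iff_right h2R ENNReal.ofReal_ne_top, ← mul_assoc,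
      ← ENNReal.ofReal_mul (by positivity)]
    convert h R hR using 3
    field_simp
    ring
  have hlim : Tendsto (fun R : ℝ => ENNReal.ofReal (1 + C / R) * b) atTop (𝓝 b) := by
    have : Tendsto (fun R : ℝ => 1 + C / R) atTop (𝓝 1) := by
      simpa using (tendsto_const_nhds (x := (1 : ℝ))).add
        ((tendsto_const_nhds (x := C)).div_atTop tendsto_id)
    simpa using ENNReal.Tendsto.mul_const (ENNReal.tendsto_ofReal this) (Or.inl (by simp))
  exact ge_of_tendsto hlim ((eventually_gt_atTop 0).mono hle)

lemma exists_linearIsometryEquiv_apply_eq_smul_single {ι : Type*} [Fintype ι] [DecidableEq ι]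
    (v : EuclideanSpace ℝ ι) (i : ι) :
    ∃ φ : EuclideanSpace ℝ ι ≃ₗᵢ[ℝ] EuclideanSpace ℝ ι, φ v = ‖v‖ • single i (1 : ℝ) :=
  ⟨(ℝ ∙ (v - ‖v‖ • single i 1))ᗮ.reflection, Submodule.reflection_sub (by simp [norm_smul])⟩

section VerticalCylinder

variable {m : ℕ}

def projInit (m : ℕ) : EuclideanSpace ℝ (Fin (m + 1)) →ₗ[ℝ] EuclideanSpace ℝ (Fin m) where
  toFun x := WithLp.toLp 2 (Fin.init x.ofLp)
  map_add' _ _ := rfl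
  map_smul' _ _ := rfl

@[simp]
lemma projInit_apply (x : EuclideanSpace ℝ (Fin (m + 1))) (i : Fin m) :
    projInit m x i = x i.castSucc := rfl

@[simp]
lemma projInit_single_last (c : ℝ) : projInit m (single (Fin.last m) c) = 0 := by
  ext i
  simp [(Fin.castSucc_lt_last i).ne]

def liftInit (m : ℕ) (z : EuclideanSpace ℝ (Fin m)) : EuclideanSpace ℝ (Fin (m + 1)) :=
  WithLp.toLp 2 (Fin.snoc z.ofLp 0)

@[simp]
lemma projInit_liftInit (z : EuclideanSpace ℝ (Fin m)) : projInit m (liftInit m z) = z := by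
  ext i
  simp [liftInit]

lemma norm_sq_eq_norm_projInit_sq_add (x : EuclideanSpace ℝ (Fin (m + 1))) :
    ‖x‖ ^ 2 = ‖projInit m x‖ ^ 2 + x (Fin.last m) ^ 2 := by
  simp [EuclideanSpace.norm_sq_eq, Fin.sum_univ_castSucc]

lemma norm_le_norm_projInit_add_abs (x : EuclideanSpace ℝ (Fin (m + 1))) :
    ‖x‖ ≤ ‖projInit m x‖ + |x (Fin.last m)| := by
  refine le_of_sq_le_sq ?_ (by positivity)
  rw [norm_sq_eq_norm_projInit_sq_add, add_sq, sq_abs]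
  nlinarith [norm_nonneg (projInit m x), abs_nonneg (x (Fin.last m))]

lemma lipschitzWith_projInit : LipschitzWith 1 (projInit m) := by
  refine LipschitzWith.of_dist_le_mul fun x y => ?_
  rw [NNReal.coe_one, one_mul, dist_eq_norm, dist_eq_norm, ← map_sub]
  refine le_of_sq_le_sq ?_ (norm_nonneg _)
  rw [norm_sq_eq_norm_projInit_sq_add (x - y)]
  nlinarith [sq_nonneg ((x - y) (Fin.last m))]

lemma mem_cthickening_verticalLine {q x : EuclideanSpace ℝ (Fin (m + 1))} {r : ℝ}
    (h : dist (projInit m x) (projInit m q) ≤ r) :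
    x ∈ cthickening r {y | ∃ t : ℝ, y = q + t • single (Fin.last m) 1} := by
  refine mem_cthickening_of_dist_le x
    (q + (x (Fin.last m) - q (Fin.last m)) • single (Fin.last m) 1) r _ ⟨_, rfl⟩
    (le_trans (le_of_eq ?_) h)
  rw [dist_eq_norm, dist_eq_norm, ← sq_eq_sq₀ (norm_nonneg _) (norm_nonneg _),
    norm_sq_eq_norm_projInit_sq_add]
  simp

def verticalCylinder (A : Set (EuclideanSpace ℝ (Fin m))) (s : Set ℝ) :
    Set (EuclideanSpace ℝ (Fin (m + 1))) :=
  {x | x (Fin.last m) ∈ s ∧ projInit m x ∈ A}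

lemma volume_verticalCylinder (A : Set (EuclideanSpace ℝ (Fin m))) (s : Set ℝ) :
    volume (verticalCylinder A s) = volume s * volume A := by
  let e : EuclideanSpace ℝ (Fin (m + 1)) ≃ᵐ ℝ × EuclideanSpace ℝ (Fin m) :=
    (MeasurableEquiv.toLp 2 _).symm.trans <|
      (MeasurableEquiv.piFinSuccAbove (fun _ => ℝ) (Fin.last m)).trans <|
        MeasurableEquiv.prodCongr (MeasurableEquiv.refl ℝ) (MeasurableEquiv.toLp 2 _)
  have he : MeasurePreserving e :=
    (EuclideanSpace.volume_preserving_symm_measurableEquiv_toLp _).trans <|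
      (volume_preserving_piFinSuccAbove (fun _ => ℝ) (Fin.last m)).trans <|
        (MeasurePreserving.id volume).prod (PiLp.volume_preserving_toLp _)
  have hset : verticalCylinder A s = e ⁻¹' (s ×ˢ A) := by
    ext x
    refine and_congr Iff.rfl ?_
    simp [e, MeasurableEquiv.piFinSuccAbove, MeasurableEquiv.prodCongr]
    rfl
  rw [hset, he.measure_preimage_equiv, Measure.volume_eq_prod, Measure.prod_prod]

lemma volume_closedBall_eq_unitBallVolume_mul (x : EuclideanSpace ℝ (Fin m)) {r : ℝ}
    (hr : 0 ≤ r) : volume (closedBall x r) = unitBallVolume m * ENNReal.ofReal (r ^ m) := by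
  rw [Measure.addHaar_closedBall' _ _ hr, finrank_euclideanSpace_fin, unitBallVolume, mul_comm]

lemma volume_inter_closedBall_le_of_isTube {T : Set (EuclideanSpace ℝ (Fin (m + 1)))} {r : ℝ}
    (hT : IsTube T r) (B : ℝ) :
    volume (T ∩ closedBall 0 B) ≤
      ENNReal.ofReal (2 * B) * (unitBallVolume m * ENNReal.ofReal (r ^ m)) := by
  obtain ⟨hr, p, v, -, rfl⟩ := hT
  obtain ⟨φ, hφ⟩ := exists_linearIsometryEquiv_apply_eq_smul_single v (Fin.last m)
  have hsub : cthickening r {x | ∃ t : ℝ, x = p + t • v} ∩ closedBall 0 B ⊆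
      φ ⁻¹' verticalCylinder (closedBall (projInit m (φ p)) r) (Icc (-B) B) := by
    rintro x ⟨hxT, hxB⟩
    refine ⟨abs_le.1 ?_, ?_⟩
    · calc |φ x (Fin.last m)| ≤ ‖φ x‖ := by simpa using PiLp.norm_apply_le (φ x) (Fin.last m)
        _ ≤ B := by simpa using hxB
    · have hf : LipschitzWith 1 (projInit m ∘ φ) := by
        simpa using lipschitzWith_projInit.comp φ.lipschitz
      refine hf.dist_le_of_mem_cthickening ?_ hr.le hxT
      rintro _ ⟨t, rfl⟩
      simp [hφ]
  calc volume (cthickening r {x | ∃ t : ℝ, x = p + t • v} ∩ closedBall 0 B)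
      ≤ volume (φ ⁻¹' verticalCylinder (closedBall (projInit m (φ p)) r) (Icc (-B) B)) :=
        measure_mono hsub
    _ = ENNReal.ofReal (2 * B) * (unitBallVolume m * ENNReal.ofReal (r ^ m)) := by
      rw [← φ.coe_toMeasurableEquiv, φ.measurePreserving.measure_preimage_equiv,
        volume_verticalCylinder, Real.volume_Icc, volume_closedBall_eq_unitBallVolume_mul _ hr.le,
        sub_neg_eq_add, two_mul]

lemma volume_le_tsum_of_verticalCylinder_subset_iUnion {ι : Type*} [Countable ι]
    {A : Set (EuclideanSpace ℝ (Fin m))} (hA : Bornology.IsBounded A)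
    {T : ι → Set (EuclideanSpace ℝ (Fin (m + 1)))} {r : ι → ℝ} (hT : ∀ i, IsTube (T i) (r i))
    (hcov : verticalCylinder A univ ⊆ ⋃ i, T i) :
    volume A ≤ ∑' i, unitBallVolume m * ENNReal.ofReal (r i ^ m) := by
  obtain ⟨C, hC⟩ := hA.subset_closedBall 0
  refine ENNReal.le_of_forall_ofReal_mul_le (C := C) fun R hR => ?_
  have hsub : verticalCylinder A (Icc (-R) R) ⊆ ⋃ i, T i ∩ closedBall 0 (C + R) := by
    rintro x ⟨hxR, hxA⟩
    obtain ⟨i, hi⟩ := mem_iUnion.1 (hcov ⟨mem_univ _, hxA⟩)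
    refine mem_iUnion.2 ⟨i, hi, mem_closedBall_zero_iff.2 ?_⟩
    calc ‖x‖ ≤ ‖projInit m x‖ + |x (Fin.last m)| := norm_le_norm_projInit_add_abs x
      _ ≤ C + R := add_le_add (mem_closedBall_zero_iff.1 (hC hxA)) (abs_le.2 hxR)
  calc ENNReal.ofReal (2 * R) * volume A = volume (verticalCylinder A (Icc (-R) R)) := by
        rw [volume_verticalCylinder, Real.volume_Icc, sub_neg_eq_add, two_mul]
    _ ≤ ∑' i, volume (T i ∩ closedBall 0 (C + R)) :=
        (measure_mono hsub).trans (measure_iUnion_le _)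
    _ ≤ ∑' i, ENNReal.ofReal (2 * (C + R)) * (unitBallVolume m * ENNReal.ofReal (r i ^ m)) :=
        ENNReal.tsum_le_tsum fun i => volume_inter_closedBall_le_of_isTube (hT i) _
    _ = ENNReal.ofReal (2 * (C + R)) * ∑' i, unitBallVolume m * ENNReal.ofReal (r i ^ m) :=
        ENNReal.tsum_mul_left

lemma volume_le_tubeMeasure_verticalCylinder {A : Set (EuclideanSpace ℝ (Fin m))}
    (hA : Bornology.IsBounded A) : volume A ≤ tubeMeasure (m + 1) (verticalCylinder A univ) :=
  le_iInf₂ fun _ _ => le_iInf₂ fun hT hcov =>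
    volume_le_tsum_of_verticalCylinder_subset_iUnion hA hT hcov

open Filter Topology in
lemma exists_pos_unitBallVolume_mul_lt (hm : m ≠ 0) {η : ℝ≥0∞} (hη : 0 < η) :
    ∃ c : ℝ, 0 < c ∧ unitBallVolume m * ENNReal.ofReal (c ^ m) < η := by
  have hlim : Tendsto (fun c : ℝ => unitBallVolume m * ENNReal.ofReal (c ^ m)) (𝓝[>] 0) (𝓝 0) := by
    have hpow : Tendsto (fun c : ℝ => c ^ m) (𝓝[>] 0) (𝓝 0) := by
      simpa [zero_pow hm] using ((continuous_pow (M := ℝ) m).tendsto 0).mono_left nhdsWithin_le_nhds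
    simpa using ENNReal.Tendsto.const_mul (a := unitBallVolume m) (ENNReal.tendsto_ofReal hpow)
      (Or.inr measure_closedBall_lt_top.ne)
  exact ((hlim.eventually (gt_mem_nhds hη)).and self_mem_nhdsWithin).exists.imp
    fun c hc => ⟨hc.2, hc.1⟩

lemma exists_pos_tsum_unitBallVolume_mul_le (hm : m ≠ 0) {ε : ℝ≥0∞} (hε : ε ≠ 0) :
    ∃ c : ℕ → ℝ, (∀ n, 0 < c n) ∧ ∑' n, unitBallVolume m * ENNReal.ofReal (c n ^ m) ≤ ε := by
  obtain ⟨ε', hε'0, hε'⟩ := ENNReal.exists_pos_sum_of_countable' hε ℕ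
  choose c hc hcε' using fun n => exists_pos_unitBallVolume_mul_lt hm (hε'0 n)
  exact ⟨c, hc, (ENNReal.tsum_le_tsum fun n => (hcε' n).le).trans hε'.le⟩

/-- `tubeMeasure` only admits covers indexed by `ℕ` by tubes of positive radius, so a countable
cover is completed by thin tubes of total cost at most `ε`. -/
lemma tubeMeasure_le_tsum_of_countable {ι : Type*} [Countable ι] (hm : m ≠ 0)
    {E : Set (EuclideanSpace ℝ (Fin (m + 1)))} {T : ι → Set (EuclideanSpace ℝ (Fin (m + 1)))}
    {r : ι → ℝ} (hT : ∀ i, IsTube (T i) (r i)) (hE : E ⊆ ⋃ i, T i) :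
    tubeMeasure (m + 1) E ≤ ∑' i, unitBallVolume m * ENNReal.ofReal (r i ^ m) := by
  refine ENNReal.le_of_forall_pos_le_add fun ε hε _ => ?_
  obtain ⟨c, hc, hcε⟩ := exists_pos_tsum_unitBallVolume_mul_le hm (ENNReal.coe_ne_zero.2 hε.ne')
  obtain ⟨e⟩ : Nonempty (ℕ ≃ ι ⊕ ℕ) := inferInstance
  let T' : ι ⊕ ℕ → Set (EuclideanSpace ℝ (Fin (m + 1))) :=
    Sum.elim T fun n => cthickening (c n) {x | ∃ t : ℝ, x = 0 + t • single 0 1}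
  have hT' : ∀ s, IsTube (T' s) (Sum.elim r c s) := by
    rintro (i | n)
    exacts [hT i, ⟨hc n, 0, single 0 1, by simp, rfl⟩]
  have hE' : E ⊆ ⋃ k, T' (e k) := by
    rw [e.surjective.iUnion_comp T']
    exact hE.trans (iUnion_subset fun i => subset_iUnion T' (.inl i))
  calc tubeMeasure (m + 1) E
      ≤ ∑' k, unitBallVolume m * ENNReal.ofReal (Sum.elim r c (e k) ^ m) :=
        iInf₂_le_of_le _ _ <| iInf₂_le_of_le (fun k => hT' (e k)) hE' le_rfl
    _ = ∑' i, unitBallVolume m * ENNReal.ofReal (r i ^ m) +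
          ∑' n, unitBallVolume m * ENNReal.ofReal (c n ^ m) :=
        (e.tsum_eq fun s => unitBallVolume m * ENNReal.ofReal (Sum.elim r c s ^ m)).trans
          (ENNReal.summable.tsum_sum ENNReal.summable)
    _ ≤ _ := add_le_add_right hcε _

lemma tubeMeasure_verticalCylinder_le (hm : m ≠ 0) (A : Set (EuclideanSpace ℝ (Fin m))) :
    tubeMeasure (m + 1) (verticalCylinder A univ) ≤ volume A := by
  refine ENNReal.le_of_forall_pos_le_add fun ε hε _ => ?_
  obtain ⟨t, ρ, ht, -, hρ, hAt, hsum⟩ :=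
    Besicovitch.exists_closedBall_covering_tsum_measure_le volume
      (ENNReal.coe_ne_zero.2 hε.ne') (fun _ => Ioi 0) A
      fun _ _ δ hδ => ⟨δ / 2, half_pos hδ, half_pos hδ, half_lt_self hδ⟩
  have : Countable t := ht.to_subtype
  let T : t → Set (EuclideanSpace ℝ (Fin (m + 1))) := fun a =>
    cthickening (ρ a) {y | ∃ s : ℝ, y = liftInit m a + s • single (Fin.last m) 1}
  have hcov : verticalCylinder A univ ⊆ ⋃ a, T a := by
    rintro x ⟨-, hx⟩
    obtain ⟨a, ha, hxa⟩ := mem_iUnion₂.1 (hAt hx)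
    exact mem_iUnion.2 ⟨⟨a, ha⟩, mem_cthickening_verticalLine (by simpa using hxa)⟩
  calc tubeMeasure (m + 1) (verticalCylinder A univ)
      ≤ ∑' a : t, unitBallVolume m * ENNReal.ofReal (ρ a ^ m) :=
        tubeMeasure_le_tsum_of_countable hm (fun a => ⟨hρ a a.2, _, _, by simp, rfl⟩) hcov
    _ = ∑' a : t, volume (closedBall (a : EuclideanSpace ℝ (Fin m)) (ρ a)) := by
        simp only [volume_closedBall_eq_unitBallVolume_mul _ (le_of_lt (hρ _ (Subtype.prop _)))]
    _ ≤ volume A + ε := hsum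

def cube (m : ℕ) (δ : ℝ) : Set (EuclideanSpace ℝ (Fin m)) :=
  {z | ∀ i, z i ∈ Icc (-δ) δ}

lemma squareTube_eq_verticalCylinder (δ : ℝ) :
    squareTube m δ = verticalCylinder (cube m δ) univ := by
  ext x
  simp [squareTube, verticalCylinder, cube]

lemma isBounded_cube (δ : ℝ) : Bornology.IsBounded (cube m δ) :=
  (PiLp.antilipschitzWith_ofLp 2 fun _ : Fin m => ℝ).isBounded_preimage
    (Bornology.IsBounded.pi fun _ => Metric.isBounded_Icc (-δ) δ) |>.subset fun _ hz =>
      mem_univ_pi.2 hz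

lemma volume_cube {δ : ℝ} (hδ : 0 ≤ δ) : volume (cube m δ) = ENNReal.ofReal ((2 * δ) ^ m) := by
  have : cube m δ = (MeasurableEquiv.toLp 2 (Fin m → ℝ)).symm ⁻¹' univ.pi fun _ => Icc (-δ) δ := by
    ext z
    simp only [cube, mem_ofPred_eq, mem_preimage, mem_univ_pi, MeasurableEquiv.toLp_symm_apply]
  rw [this, (EuclideanSpace.volume_preserving_symm_measurableEquiv_toLp _).measure_preimage_equiv,
    volume_pi_pi]
  simp only [Real.volume_Icc, Finset.prod_const, Finset.card_univ, Fintype.card_fin]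
  rw [sub_neg_eq_add, ← two_mul, ← ENNReal.ofReal_pow (by linarith)]

end VerticalCylinder

/-- `μ([-δ, δ]^{n-1} × ℝ) = (2δ)^{n-1}`. -/
theorem tubeMeasure_squareTube (m : ℕ) (hm : 1 ≤ m) (δ : ℝ) (hδ : 0 < δ) :
    tubeMeasure (m + 1) (squareTube m δ) = ENNReal.ofReal ((2 * δ) ^ m) := by
  rw [squareTube_eq_verticalCylinder, ← volume_cube hδ.le]
  exact le_antisymm (tubeMeasure_verticalCylinder_le (by omega) _)
    (volume_le_tubeMeasure_verticalCylinder (isBounded_cube δ))
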